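/- Let σ be the ℚ-algebra automorphism of the field ℚ(q,z1,z2) determined by σ(q) = q⁻¹, σ(z1) = z1⁻¹, σ(z2) = z2⁻¹. Then for all integers d1, d2 ≥ 0 and 0 ≤ n ≤ min(d1,d2): σ(I_{d1,d2,n}) = q^{d1²+d2²−d1·d2+d1+d2} · z1^{−d1} · z2^{−d2} · I_{d1,d2,n}, and consequently the same identity holds with I_{d1,d2,n} replaced by I_{d1,d2} = Σ_{n=0}^{min(d1,d2)} I_{d1,d2,n}. -/
import Mathlib


/-!
STATEMENT 15: for the automorphism `σ` of `ℚ(q,z1,z2)` with `σ(q)=q⁻¹`, `σ(z1)=z1⁻¹`,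
`σ(z2)=z2⁻¹`, one has
`σ(I_{d1,d2,n}) = q^{d1²+d2²-d1d2+d1+d2} z1^{-d1} z2^{-d2} I_{d1,d2,n}`,
and the same identity with `I_{d1,d2,n}` replaced by `I_{d1,d2} = Σ_n I_{d1,d2,n}`.
-/

set_option maxHeartbeats 2000000

noncomputable section

open scoped BigOperators

/-- The rational function field `ℚ(q,z1,z2)`. -/
abbrev K : Type := FractionRing (MvPolynomial (Fin 3) ℚ)

def q : K := algebraMap (MvPolynomial (Fin 3) ℚ) K (MvPolynomial.X 0)
def z1 : K := algebraMap (MvPolynomial (Fin 3) ℚ) K (MvPolynomial.X 1)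
def z2 : K := algebraMap (MvPolynomial (Fin 3) ℚ) K (MvPolynomial.X 2)

/-- `(a)_n = ∏_{i=0}^{n-1} (1 - a q^i)`. -/
def poch (a : K) (n : ℕ) : K := ∏ i ∈ Finset.range n, (1 - a * q ^ i)

/-- `P_{d1,n}(z2) = (q z2)_∞ / (q^{d1-2n+1} z2)_∞` as a rational function. -/
def PP (d1 n : ℕ) : K :=
  if 2 * n ≤ d1 then ∏ j ∈ Finset.range (d1 - 2 * n), (1 - q ^ (j + 1) * z2)
  else (∏ j ∈ Finset.range (2 * n - d1), (1 - q ^ ((d1 : ℤ) - 2 * n + 1 + j) * z2))⁻¹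

/-- `I_{d1,d2,n}(z1,z2)`. -/
def Iddn (d1 d2 n : ℕ) : K :=
  (1 / (poch q (d1 - n) * poch q (d2 - n) * poch q n)) *
    PP d1 n /
      (poch (q * z1⁻¹) (d1 - n) * poch (q * z1⁻¹ * z2⁻¹) n *
        poch (q ^ (-(d1 : ℤ) + 2 * n + 1) * z2⁻¹) (d2 - n) *
        poch (q * z2) (d1 - n) * poch (q * z2⁻¹) n)

lemma q_ne : q ≠ 0 := by
  simpa [q] using (map_ne_zero_iff _ (IsFractionRing.injective (MvPolynomial (Fin 3) ℚ) K)).mpr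
    (MvPolynomial.X_ne_zero (0 : Fin 3))
lemma z1_ne : z1 ≠ 0 := by
  simpa [z1] using (map_ne_zero_iff _ (IsFractionRing.injective (MvPolynomial (Fin 3) ℚ) K)).mpr
    (MvPolynomial.X_ne_zero (1 : Fin 3))
lemma z2_ne : z2 ≠ 0 := by
  simpa [z2] using (map_ne_zero_iff _ (IsFractionRing.injective (MvPolynomial (Fin 3) ℚ) K)).mpr
    (MvPolynomial.X_ne_zero (2 : Fin 3))

/-- triangular numbers -/
def tt : ℕ → ℕ
  | 0 => 0
  | m + 1 => tt m + m

lemma tt_cast (m : ℕ) : 2 * (tt m : ℤ) = m * (m - 1) := by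
  induction m with
  | zero => simp [tt]
  | succ k ih => show 2 * ((tt k + k : ℕ) : ℤ) = _; push_cast at ih ⊢; linarith [ih]

lemma poch_succ (a : K) (k : ℕ) : poch a (k + 1) = poch a k * (1 - a * q ^ k) :=
  Finset.prod_range_succ _ _

lemma sigma_poch (σ : K ≃+* K) (hq : σ q = q⁻¹) (a : K) (ha : a ≠ 0) (hsa : σ a = a⁻¹)
    (m : ℕ) : σ (poch a m) = (-1) ^ m * ((a ^ m)⁻¹ * (q ^ tt m)⁻¹) * poch a m := by
  induction m with
  | zero => simp [poch, tt]
  | succ k ih =>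
    have h1 : a⁻¹ * (q ^ k)⁻¹ * (a * q ^ k) = 1 := by
      rw [← mul_inv]; exact inv_mul_cancel₀ (mul_ne_zero ha (pow_ne_zero _ q_ne))
    have key : (1 - a⁻¹ * (q ^ k)⁻¹) = -(a⁻¹ * (q ^ k)⁻¹) * (1 - a * q ^ k) := by
      linear_combination -h1
    rw [poch_succ, map_mul, ih, map_sub, map_one, map_mul, map_pow, hq, hsa, inv_pow, key,
      show tt (k + 1) = tt k + k from rfl]
    ring

/-- monomials `q^a z1^b z2^c` -/
def mono (a b c : ℤ) : K := q ^ a * z1 ^ b * z2 ^ c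

lemma mono_mul (a b c a' b' c' : ℤ) :
    mono a b c * mono a' b' c' = mono (a + a') (b + b') (c + c') := by
  simp only [mono, zpow_add₀ q_ne, zpow_add₀ z1_ne, zpow_add₀ z2_ne]; ring

lemma mono_inv (a b c : ℤ) : (mono a b c)⁻¹ = mono (-a) (-b) (-c) := by
  simp only [mono, mul_inv, zpow_neg]

lemma mono_ne (a b c : ℤ) : mono a b c ≠ 0 :=
  mul_ne_zero (mul_ne_zero (zpow_ne_zero _ q_ne) (zpow_ne_zero _ z1_ne)) (zpow_ne_zero _ z2_ne)

lemma mono_congr {a a' b b' c c' : ℤ} (h1 : a = a') (h2 : b = b') (h3 : c = c') :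
    mono a b c = mono a' b' c' := by rw [h1, h2, h3]

lemma mono_pow (a b c : ℤ) (m : ℕ) : mono a b c ^ m = mono (m * a) (m * b) (m * c) := by
  induction m with
  | zero => simp [mono]
  | succ k ih =>
    rw [pow_succ, ih, mono_mul]
    exact mono_congr (by push_cast; ring) (by push_cast; ring) (by push_cast; ring)

lemma q_zpow_mono (x : ℤ) : q ^ x = mono x 0 0 := by simp [mono]
lemma q_pow_mono (k : ℕ) : q ^ k = mono (k : ℤ) 0 0 := by simp [mono, zpow_natCast]

lemma sigma_mono (σ : K ≃+* K) (hq : σ q = q⁻¹) (hz1 : σ z1 = z1⁻¹) (hz2 : σ z2 = z2⁻¹)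
    (a b c : ℤ) : σ (mono a b c) = (mono a b c)⁻¹ := by
  rw [mono, map_mul, map_mul, map_zpow₀, map_zpow₀, map_zpow₀, hq, hz1, hz2]
  simp only [inv_zpow, mono, mul_inv]

lemma conv_mono (a b c : ℤ) (m k : ℕ) :
    ((mono a b c ^ m)⁻¹ * (q ^ k)⁻¹) = (mono ((m : ℤ) * a + k) ((m : ℤ) * b) ((m : ℤ) * c))⁻¹ := by
  rw [mono_pow, q_pow_mono, ← mul_inv, mono_mul]
  exact congrArg Inv.inv (mono_congr rfl (add_zero _) (add_zero _))

lemma sigma_poch_arg (σ : K ≃+* K) (hq : σ q = q⁻¹) (hz1 : σ z1 = z1⁻¹) (hz2 : σ z2 = z2⁻¹)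
    (a b c : ℤ) (x : K) (hx : x = mono a b c) (m : ℕ) :
    σ (poch x m) =
      (-1) ^ m * (mono ((m : ℤ) * a + tt m) ((m : ℤ) * b) ((m : ℤ) * c))⁻¹ * poch x m := by
  rw [hx, sigma_poch σ hq _ (mono_ne a b c) (sigma_mono σ hq hz1 hz2 a b c), conv_mono]

lemma sigma_PP_pos (σ : K ≃+* K) (hq : σ q = q⁻¹) (hz2 : σ z2 = z2⁻¹) (m : ℕ) :
    σ (∏ j ∈ Finset.range m, (1 - q ^ (j + 1) * z2)) =
      (-1) ^ m * (mono ((tt m : ℤ) + m) 0 (m : ℤ))⁻¹ *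
        ∏ j ∈ Finset.range m, (1 - q ^ (j + 1) * z2) := by
  induction m with
  | zero => norm_num [tt, mono]
  | succ k ih =>
    have h1 : ((q : K) ^ (k + 1))⁻¹ * z2⁻¹ * (q ^ (k + 1) * z2) = 1 := by
      rw [← mul_inv]; exact inv_mul_cancel₀ (mul_ne_zero (pow_ne_zero _ q_ne) z2_ne)
    have key : (1 : K) - ((q : K) ^ (k + 1))⁻¹ * z2⁻¹ =
        -(((q : K) ^ (k + 1))⁻¹ * z2⁻¹) * (1 - q ^ (k + 1) * z2) := by
      linear_combination -h1
    have hqz : ((q : K) ^ (k + 1))⁻¹ * z2⁻¹ = (mono ((k : ℤ) + 1) 0 1)⁻¹ := by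
      rw [q_pow_mono, ← mul_inv, show (z2 : K) = mono 0 0 1 by simp [mono], mono_mul]
      exact congrArg Inv.inv (mono_congr (by push_cast; ring) (by ring) (by ring))
    have hM : (mono ((tt k : ℤ) + k) 0 (k : ℤ))⁻¹ * (mono ((k : ℤ) + 1) 0 1)⁻¹ =
        (mono ((tt (k + 1) : ℤ) + ((k + 1 : ℕ) : ℤ)) 0 ((k + 1 : ℕ) : ℤ))⁻¹ := by
      rw [← mul_inv, mono_mul]
      refine congrArg Inv.inv (mono_congr ?_ (by ring) (by push_cast; ring))
      rw [show tt (k + 1) = tt k + k from rfl]; push_cast; ring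
    rw [Finset.prod_range_succ, map_mul, ih, map_sub, map_one, map_mul, map_pow, hq, hz2,
      inv_pow, key, hqz, ← hM]
    ring

lemma sigma_PP_neg (σ : K ≃+* K) (hq : σ q = q⁻¹) (hz2 : σ z2 = z2⁻¹) (e : ℤ) (m : ℕ) :
    σ (∏ j ∈ Finset.range m, (1 - q ^ (e + (j : ℤ)) * z2)) =
      (-1) ^ m * (mono ((m : ℤ) * e + (tt m : ℤ)) 0 (m : ℤ))⁻¹ *
        ∏ j ∈ Finset.range m, (1 - q ^ (e + (j : ℤ)) * z2) := by
  induction m with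
  | zero => norm_num [tt, mono]
  | succ k ih =>
    have h1 : ((q : K) ^ (e + (k : ℤ)))⁻¹ * z2⁻¹ * (q ^ (e + (k : ℤ)) * z2) = 1 := by
      rw [← mul_inv]; exact inv_mul_cancel₀ (mul_ne_zero (zpow_ne_zero _ q_ne) z2_ne)
    have key : (1 : K) - ((q : K) ^ (e + (k : ℤ)))⁻¹ * z2⁻¹ =
        -(((q : K) ^ (e + (k : ℤ)))⁻¹ * z2⁻¹) * (1 - q ^ (e + (k : ℤ)) * z2) := by
      linear_combination -h1
    have hqz : ((q : K) ^ (e + (k : ℤ)))⁻¹ * z2⁻¹ = (mono (e + (k : ℤ)) 0 1)⁻¹ := by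
      rw [q_zpow_mono, ← mul_inv, show (z2 : K) = mono 0 0 1 by simp [mono], mono_mul]
      exact congrArg Inv.inv (mono_congr (by ring) (by ring) (by ring))
    have hM : (mono ((k : ℤ) * e + (tt k : ℤ)) 0 (k : ℤ))⁻¹ * (mono (e + (k : ℤ)) 0 1)⁻¹ =
        (mono (((k + 1 : ℕ) : ℤ) * e + (tt (k + 1) : ℤ)) 0 ((k + 1 : ℕ) : ℤ))⁻¹ := by
      rw [← mul_inv, mono_mul]
      refine congrArg Inv.inv (mono_congr ?_ (by ring) (by push_cast; ring))
      rw [show tt (k + 1) = tt k + k from rfl]; push_cast; ring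
    rw [Finset.prod_range_succ, map_mul, ih, map_sub, map_one, map_mul, map_zpow₀, hq, hz2,
      inv_zpow, key, hqz, ← hM]
    ring

/-- signed monomial atom -/
def sg (s : ℕ) (u v w : ℤ) : K := (-1) ^ s * mono u v w

lemma sg_inv (s : ℕ) (u v w : ℤ) : (sg s u v w)⁻¹ = sg s (-u) (-v) (-w) := by
  simp only [sg, mul_inv, mono_inv, ← inv_pow, inv_neg, inv_one]

lemma sg_mul (s s' : ℕ) (u v w u' v' w' : ℤ) :
    sg s u v w * sg s' u' v' w' = sg (s + s') (u + u') (v + v') (w + w') := by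
  rw [sg, sg, sg, pow_add, ← mono_mul]; ring

lemma sigma_poch_arg2 (σ : K ≃+* K) (hq : σ q = q⁻¹) (hz1 : σ z1 = z1⁻¹) (hz2 : σ z2 = z2⁻¹)
    (a b c : ℤ) (x : K) (hx : x = mono a b c) (m : ℕ) (u v w : ℤ)
    (hu : u = -((m : ℤ) * a) - tt m) (hv : v = -((m : ℤ) * b)) (hw : w = -((m : ℤ) * c)) :
    σ (poch x m) = sg m u v w * poch x m := by
  rw [sg]
  rw [sigma_poch_arg σ hq hz1 hz2 a b c x hx m, mono_inv,
    mono_congr (show -((m : ℤ) * a + tt m) = u by rw [hu]; ring)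
      (show -((m : ℤ) * b) = v by rw [hv]) (show -((m : ℤ) * c) = w by rw [hw])]

lemma sigma_PP_pos2 (σ : K ≃+* K) (hq : σ q = q⁻¹) (hz2 : σ z2 = z2⁻¹) (m : ℕ) (u w : ℤ)
    (hu : u = -(tt m : ℤ) - m) (hw : w = -(m : ℤ)) :
    σ (∏ j ∈ Finset.range m, (1 - q ^ (j + 1) * z2)) =
      sg m u 0 w * ∏ j ∈ Finset.range m, (1 - q ^ (j + 1) * z2) := by
  rw [sg]
  rw [sigma_PP_pos σ hq hz2 m, mono_inv,
    mono_congr (show -((tt m : ℤ) + m) = u by rw [hu]; ring)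
      (show -(0 : ℤ) = 0 by ring) (show -(m : ℤ) = w by rw [hw])]

lemma sigma_PP_neg2 (σ : K ≃+* K) (hq : σ q = q⁻¹) (hz2 : σ z2 = z2⁻¹) (e : ℤ) (m : ℕ)
    (u w : ℤ) (hu : u = -((m : ℤ) * e) - (tt m : ℤ)) (hw : w = -(m : ℤ)) :
    σ (∏ j ∈ Finset.range m, (1 - q ^ (e + (j : ℤ)) * z2)) =
      sg m u 0 w * ∏ j ∈ Finset.range m, (1 - q ^ (e + (j : ℤ)) * z2) := by
  rw [sg]
  rw [sigma_PP_neg σ hq hz2 e m, mono_inv,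
    mono_congr (show -((m : ℤ) * e + (tt m : ℤ)) = u by rw [hu]; ring)
      (show -(0 : ℤ) = 0 by ring) (show -(m : ℤ) = w by rw [hw])]


lemma key (σ : K ≃+* K) (hq : σ q = q⁻¹) (hz1 : σ z1 = z1⁻¹) (hz2 : σ z2 = z2⁻¹)
    (d1 d2 n : ℕ) (hn : n ≤ min d1 d2) :
    σ (Iddn d1 d2 n) =
      q ^ ((d1 : ℤ) ^ 2 + (d2 : ℤ) ^ 2 - (d1 : ℤ) * (d2 : ℤ) + d1 + d2) *
        z1 ^ (-(d1 : ℤ)) * z2 ^ (-(d2 : ℤ)) * Iddn d1 d2 n := by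
  have hn1 : n ≤ d1 := hn.trans (min_le_left _ _)
  have hn2 : n ≤ d2 := hn.trans (min_le_right _ _)
  have ha1 : (q : K) = mono 1 0 0 := by simp [mono]
  have ha4 : q * z1⁻¹ = mono 1 (-1) 0 := by simp [mono, zpow_neg]
  have ha5 : q * z1⁻¹ * z2⁻¹ = mono 1 (-1) (-1) := by simp [mono, zpow_neg]
  have ha6 : q ^ (-(d1 : ℤ) + 2 * n + 1) * z2⁻¹ = mono (-(d1 : ℤ) + 2 * n + 1) 0 (-1) := by
    simp [mono, zpow_neg]
  have ha7 : q * z2 = mono 1 0 1 := by simp [mono]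
  have ha8 : q * z2⁻¹ = mono 1 0 (-1) := by simp [mono, zpow_neg]
  have hS1 := sigma_poch_arg2 σ hq hz1 hz2 1 0 0 q ha1 (d1 - n)
    (-(d1 : ℤ) + n - tt (d1 - n)) 0 0 (by omega) (by omega) (by omega)
  have hS2 := sigma_poch_arg2 σ hq hz1 hz2 1 0 0 q ha1 (d2 - n)
    (-(d2 : ℤ) + n - tt (d2 - n)) 0 0 (by omega) (by omega) (by omega)
  have hS3 := sigma_poch_arg2 σ hq hz1 hz2 1 0 0 q ha1 n
    (-(n : ℤ) - tt n) 0 0 (by omega) (by omega) (by omega)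
  have hS4 := sigma_poch_arg2 σ hq hz1 hz2 1 (-1) 0 _ ha4 (d1 - n)
    (-(d1 : ℤ) + n - tt (d1 - n)) ((d1 : ℤ) - n) 0 (by omega) (by omega) (by omega)
  have hS5 := sigma_poch_arg2 σ hq hz1 hz2 1 (-1) (-1) _ ha5 n
    (-(n : ℤ) - tt n) (n : ℤ) (n : ℤ) (by omega) (by omega) (by omega)
  have hS6 := sigma_poch_arg2 σ hq hz1 hz2 (-(d1 : ℤ) + 2 * n + 1) 0 (-1) _ ha6 (d2 - n)
    (-(((d2 : ℤ) - n) * (-(d1 : ℤ) + 2 * n + 1)) - tt (d2 - n)) 0 ((d2 : ℤ) - n)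
    (by rw [show ((d2 - n : ℕ) : ℤ) = (d2 : ℤ) - n by omega]) (by omega) (by omega)
  have hS7 := sigma_poch_arg2 σ hq hz1 hz2 1 0 1 _ ha7 (d1 - n)
    (-(d1 : ℤ) + n - tt (d1 - n)) 0 (-(d1 : ℤ) + n) (by omega) (by omega) (by omega)
  have hS8 := sigma_poch_arg2 σ hq hz1 hz2 1 0 (-1) _ ha8 n
    (-(n : ℤ) - tt n) 0 (n : ℤ) (by omega) (by omega) (by omega)
  have t1 := tt_cast (d1 - n)
  have t2 := tt_cast (d2 - n)
  have t3 := tt_cast n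
  rw [show ((d1 - n : ℕ) : ℤ) = (d1 : ℤ) - n by omega] at t1
  rw [show ((d2 - n : ℕ) : ℤ) = (d2 : ℤ) - n by omega] at t2
  by_cases hc : 2 * n ≤ d1
  · -- positive case
    have t4 := tt_cast (d1 - 2 * n)
    rw [show ((d1 - 2 * n : ℕ) : ℤ) = (d1 : ℤ) - 2 * n by omega] at t4
    have hPP : PP d1 n = ∏ j ∈ Finset.range (d1 - 2 * n), (1 - q ^ (j + 1) * z2) := if_pos hc
    have hσPP := sigma_PP_pos2 σ hq hz2 (d1 - 2 * n)
      (-(tt (d1 - 2 * n) : ℤ) - d1 + 2 * n) (-(d1 : ℤ) + 2 * n) (by omega) (by omega)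
    have hConst : sg (d1 - 2 * n) (-(tt (d1 - 2 * n) : ℤ) - d1 + 2 * n) 0 (-(d1 : ℤ) + 2 * n) *
          ((sg (d1 - n) (-(d1 : ℤ) + n - tt (d1 - n)) 0 0)⁻¹ *
            ((sg (d2 - n) (-(d2 : ℤ) + n - tt (d2 - n)) 0 0)⁻¹ *
              ((sg n (-(n : ℤ) - tt n) 0 0)⁻¹ *
                ((sg (d1 - n) (-(d1 : ℤ) + n - tt (d1 - n)) ((d1 : ℤ) - n) 0)⁻¹ *
                  ((sg n (-(n : ℤ) - tt n) (n : ℤ) (n : ℤ))⁻¹ *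
                    ((sg (d2 - n) (-(((d2 : ℤ) - n) * (-(d1 : ℤ) + 2 * n + 1)) - tt (d2 - n)) 0
                        ((d2 : ℤ) - n))⁻¹ *
                      ((sg (d1 - n) (-(d1 : ℤ) + n - tt (d1 - n)) 0 (-(d1 : ℤ) + n))⁻¹ *
                        (sg n (-(n : ℤ) - tt n) 0 (n : ℤ))⁻¹))))))) =
        q ^ ((d1 : ℤ) ^ 2 + (d2 : ℤ) ^ 2 - (d1 : ℤ) * (d2 : ℤ) + d1 + d2) *
          z1 ^ (-(d1 : ℤ)) * z2 ^ (-(d2 : ℤ)) := by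
      simp only [sg_inv, sg_mul]
      rw [sg, Even.neg_one_pow (Nat.even_iff.mpr (by omega)), one_mul]
      rw [show (q : K) ^ ((d1 : ℤ) ^ 2 + (d2 : ℤ) ^ 2 - (d1 : ℤ) * (d2 : ℤ) + d1 + d2) *
        z1 ^ (-(d1 : ℤ)) * z2 ^ (-(d2 : ℤ)) =
        mono ((d1 : ℤ) ^ 2 + (d2 : ℤ) ^ 2 - (d1 : ℤ) * (d2 : ℤ) + d1 + d2)
          (-(d1 : ℤ)) (-(d2 : ℤ)) from rfl]
      refine mono_congr ?_ (by omega) (by omega)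
      exact mul_left_cancel₀ (two_ne_zero)
        (by linear_combination 3 * t1 + 2 * t2 + 3 * t3 - t4)
    rw [Iddn, hPP]
    simp only [map_div₀, map_mul, map_one]
    rw [hσPP, hS1, hS2, hS3, hS4, hS5, hS6, hS7, hS8, ← hConst]
    ring
  · -- negative case
    have t4 := tt_cast (2 * n - d1)
    rw [show ((2 * n - d1 : ℕ) : ℤ) = 2 * (n : ℤ) - d1 by omega] at t4
    have hPP : PP d1 n =
        (∏ j ∈ Finset.range (2 * n - d1), (1 - q ^ ((d1 : ℤ) - 2 * n + 1 + j) * z2))⁻¹ :=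
      if_neg hc
    have hσPP := sigma_PP_neg2 σ hq hz2 ((d1 : ℤ) - 2 * n + 1) (2 * n - d1)
      (-((2 * (n : ℤ) - d1) * ((d1 : ℤ) - 2 * n + 1)) - tt (2 * n - d1)) (-(2 * (n : ℤ)) + d1)
      (by rw [show ((2 * n - d1 : ℕ) : ℤ) = 2 * (n : ℤ) - d1 by omega]) (by omega)
    have hConst : (sg (2 * n - d1)
            (-((2 * (n : ℤ) - d1) * ((d1 : ℤ) - 2 * n + 1)) - tt (2 * n - d1)) 0
            (-(2 * (n : ℤ)) + d1))⁻¹ *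
          ((sg (d1 - n) (-(d1 : ℤ) + n - tt (d1 - n)) 0 0)⁻¹ *
            ((sg (d2 - n) (-(d2 : ℤ) + n - tt (d2 - n)) 0 0)⁻¹ *
              ((sg n (-(n : ℤ) - tt n) 0 0)⁻¹ *
                ((sg (d1 - n) (-(d1 : ℤ) + n - tt (d1 - n)) ((d1 : ℤ) - n) 0)⁻¹ *
                  ((sg n (-(n : ℤ) - tt n) (n : ℤ) (n : ℤ))⁻¹ *
                    ((sg (d2 - n) (-(((d2 : ℤ) - n) * (-(d1 : ℤ) + 2 * n + 1)) - tt (d2 - n)) 0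
                        ((d2 : ℤ) - n))⁻¹ *
                      ((sg (d1 - n) (-(d1 : ℤ) + n - tt (d1 - n)) 0 (-(d1 : ℤ) + n))⁻¹ *
                        (sg n (-(n : ℤ) - tt n) 0 (n : ℤ))⁻¹))))))) =
        q ^ ((d1 : ℤ) ^ 2 + (d2 : ℤ) ^ 2 - (d1 : ℤ) * (d2 : ℤ) + d1 + d2) *
          z1 ^ (-(d1 : ℤ)) * z2 ^ (-(d2 : ℤ)) := by
      simp only [sg_inv, sg_mul]
      rw [sg, Even.neg_one_pow (Nat.even_iff.mpr (by omega)), one_mul]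
      rw [show (q : K) ^ ((d1 : ℤ) ^ 2 + (d2 : ℤ) ^ 2 - (d1 : ℤ) * (d2 : ℤ) + d1 + d2) *
        z1 ^ (-(d1 : ℤ)) * z2 ^ (-(d2 : ℤ)) =
        mono ((d1 : ℤ) ^ 2 + (d2 : ℤ) ^ 2 - (d1 : ℤ) * (d2 : ℤ) + d1 + d2)
          (-(d1 : ℤ)) (-(d2 : ℤ)) from rfl]
      refine mono_congr ?_ (by omega) (by omega)
      exact mul_left_cancel₀ (two_ne_zero)
        (by linear_combination 3 * t1 + 2 * t2 + 3 * t3 + t4)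
    rw [Iddn, hPP]
    simp only [map_div₀, map_mul, map_one, map_inv₀]
    rw [hσPP, hS1, hS2, hS3, hS4, hS5, hS6, hS7, hS8, ← hConst]
    ring

theorem sigma_Iddn (σ : K ≃+* K) (hq : σ q = q⁻¹) (hz1 : σ z1 = z1⁻¹) (hz2 : σ z2 = z2⁻¹)
    (d1 d2 n : ℕ) (hn : n ≤ min d1 d2) :
    σ (Iddn d1 d2 n) =
        q ^ ((d1 : ℤ) ^ 2 + (d2 : ℤ) ^ 2 - (d1 : ℤ) * (d2 : ℤ) + d1 + d2) *
          z1 ^ (-(d1 : ℤ)) * z2 ^ (-(d2 : ℤ)) * Iddn d1 d2 n ∧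
      σ (∑ m ∈ Finset.range (min d1 d2 + 1), Iddn d1 d2 m) =
        q ^ ((d1 : ℤ) ^ 2 + (d2 : ℤ) ^ 2 - (d1 : ℤ) * (d2 : ℤ) + d1 + d2) *
          z1 ^ (-(d1 : ℤ)) * z2 ^ (-(d2 : ℤ)) *
          ∑ m ∈ Finset.range (min d1 d2 + 1), Iddn d1 d2 m := by
  refine ⟨key σ hq hz1 hz2 d1 d2 n hn, ?_⟩
  rw [map_sum, Finset.mul_sum]
  exact Finset.sum_congr rfl fun m hm =>
    key σ hq hz1 hz2 d1 d2 m (Nat.lt_succ_iff.mp (Finset.mem_range.mp hm))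


end
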